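/- arXiv:1104.1970 — 2 statements merged into one kernel-verified Lean document; each statement's English description precedes it below -/
import Mathlib

section
/- Let C = {(a, σ(a)) : a ∈ F_2^{n−u}} ⊆ F_2^n be a code systematic at the first n−u positions with generator function σ : F_2^{n−u} → F_2^u, let s : F_2^n → F_2^u be the syndrome map s(a, w) = w − σ(a), and let d⊥ be the dual distance of C (defined via the Krawtchouk transform of its distance distribution). Then s is (d⊥ − 1)-resilient: for every T ⊆ {1,…,n} with #T = d⊥ − 1, every b ∈ F_2^T and every y ∈ F_2^u, the number of x ∈ F_2^n with π_T(x) = b and s(x) = y equals 2^{n − (d⊥ − 1) − u}; equivalently, conditioned on π_T(x) = b, all 2^u outputs of s are equally likely. -/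
/-- Hamming distance on F_2^p × F_2^u (i.e. on F_2^n split into two blocks,
n = p + u). -/
noncomputable def pdist (p u : ℕ) (x y : (Fin p → ZMod 2) × (Fin u → ZMod 2)) : ℕ :=
  hammingDist x.1 y.1 + hammingDist x.2 y.2

/-- The i-th coordinate of a vector of F_2^n = F_2^p × F_2^u, coordinates
indexed by Fin p ⊕ Fin u. -/
def coord (p u : ℕ) (x : (Fin p → ZMod 2) × (Fin u → ZMod 2)) : Fin p ⊕ Fin u → ZMod 2 :=
  Sum.elim x.1 x.2

/-- The distance distribution A_i = (1/#C)·#{(x,y) ∈ C×C : d(x,y) = i}. -/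
noncomputable def distDistr (p u : ℕ) (C : Set ((Fin p → ZMod 2) × (Fin u → ZMod 2)))
    (i : ℕ) : ℚ :=
  (Nat.card {z : ((Fin p → ZMod 2) × (Fin u → ZMod 2)) × ((Fin p → ZMod 2) × (Fin u → ZMod 2)) |
      z.1 ∈ C ∧ z.2 ∈ C ∧ pdist p u z.1 z.2 = i} : ℚ) / (Nat.card C : ℚ)

/-- The Krawtchouk polynomial K_i evaluated at the integer j (length n). -/
def kraw (n i j : ℕ) : ℚ :=
  ∑ l ∈ Finset.range (i + 1),
    (-1 : ℚ) ^ l * (Nat.choose j l : ℚ) * (Nat.choose (n - j) (i - l) : ℚ)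

/-- The dual distance distribution A_i⊥ = (1/#C)·Σ_j A_j K_i(j). -/
noncomputable def dualDistr (p u : ℕ) (C : Set ((Fin p → ZMod 2) × (Fin u → ZMod 2)))
    (i : ℕ) : ℚ :=
  (∑ j ∈ Finset.range (p + u + 1), distDistr p u C j * kraw (p + u) i j) / (Nat.card C : ℚ)

open Finset

/-- sign character on ZMod 2 -/
noncomputable def eps (c : ZMod 2) : ℚ := if c = 0 then 1 else -1

lemma zmod2_cases : ∀ a : ZMod 2, a = 0 ∨ a = 1 := by decide

lemma eps_zero : eps 0 = 1 := by simp [eps]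

lemma eps_add (a b : ZMod 2) : eps (a + b) = eps a * eps b := by
  rcases zmod2_cases a with h | h <;> rcases zmod2_cases b with h' | h' <;>
    subst h <;> subst h' <;> simp [eps] <;> decide

lemma eps_sub (a b : ZMod 2) : eps (a - b) = eps a * eps b := by
  rcases zmod2_cases a with h | h <;> rcases zmod2_cases b with h' | h' <;>
    subst h <;> subst h' <;> simp [eps] <;> decide

variable {ι : Type*} [Fintype ι] [DecidableEq ι]

/-- character indexed by a subset -/
noncomputable def chi (S : Finset ι) (x : ι → ZMod 2) : ℚ := ∏ i ∈ S, eps (x i)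

lemma chi_empty (x : ι → ZMod 2) : chi (∅ : Finset ι) x = 1 := by simp [chi]

lemma chi_add (S : Finset ι) (x y : ι → ZMod 2) :
    chi S (x + y) = chi S x * chi S y := by
  simp [chi, ← Finset.prod_mul_distrib, eps_add]

lemma chi_sub (S : Finset ι) (x y : ι → ZMod 2) :
    chi S (x - y) = chi S x * chi S y := by
  simp [chi, ← Finset.prod_mul_distrib, eps_sub]

lemma chi_eq_neg_one_pow (S : Finset ι) (w : ι → ZMod 2) :
    chi S w = (-1 : ℚ) ^ (S ∩ (univ.filter fun i => w i ≠ 0)).card := by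
  classical
  have h1 : S ∩ (univ.filter fun i => w i ≠ 0) = S.filter (fun i => ¬ (w i = 0)) := by
    ext i; simp [Finset.mem_filter, Finset.mem_inter, and_comm]
  rw [chi, h1]
  have : ∀ i ∈ S, eps (w i) = if w i = 0 then 1 else -1 := fun i _ => rfl
  rw [Finset.prod_congr rfl this, Finset.prod_ite, Finset.prod_const, Finset.prod_const,
    one_pow, one_mul]

/-- counting subsets with prescribed intersection size -/
lemma count_inter (W : Finset ι) (i l : ℕ) (hl : l ≤ i) :
    ((powersetCard i (univ : Finset ι)).filter fun S => (S ∩ W).card = l).card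
      = (W.card.choose l) * ((Fintype.card ι - W.card).choose (i - l)) := by
  classical
  have key : ((powersetCard i (univ : Finset ι)).filter fun S => (S ∩ W).card = l).card
      = ((powersetCard l W) ×ˢ (powersetCard (i - l) Wᶜ)).card := by
    apply Finset.card_nbij' (fun S => (S ∩ W, S \ W)) (fun z => z.1 ∪ z.2)
    · intro S hS
      simp only [Finset.mem_coe, Finset.mem_filter, mem_powersetCard_univ] at hS
      simp only [Finset.mem_coe, Finset.mem_product, Finset.mem_powersetCard]
      refine ⟨⟨inter_subset_right, hS.2⟩, ⟨fun x hx => ?_, ?_⟩⟩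
      · simp only [Finset.mem_sdiff] at hx
        simp [Finset.mem_compl, hx.2]
      · have := Finset.card_inter_add_card_sdiff S W
        omega
    · intro z hz
      simp only [Finset.mem_coe, Finset.mem_product, Finset.mem_powersetCard] at hz
      obtain ⟨⟨hA, hAc⟩, hB, hBc⟩ := hz
      have hBW : ∀ x ∈ z.2, x ∉ W := fun x hx => Finset.mem_compl.1 (hB hx)
      have h1 : (z.1 ∪ z.2) ∩ W = z.1 := by
        ext x
        simp only [Finset.mem_inter, Finset.mem_union]
        constructor
        · rintro ⟨h | h, hW⟩
          · exact h
          · exact absurd hW (hBW x h)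
        · intro h; exact ⟨Or.inl h, hA h⟩
      have hdisj : Disjoint z.1 z.2 :=
        Finset.disjoint_left.2 fun x hx hx2 => hBW x hx2 (hA hx)
      simp only [Finset.mem_coe, Finset.mem_filter, mem_powersetCard_univ]
      refine ⟨?_, by rw [h1, hAc]⟩
      rw [Finset.card_union_of_disjoint hdisj]; omega
    · intro S hS
      ext x
      simp only [Finset.mem_union, Finset.mem_inter, Finset.mem_sdiff]
      tauto
    · intro z hz
      simp only [Finset.mem_coe, Finset.mem_product, Finset.mem_powersetCard] at hz
      obtain ⟨⟨hA, hAc⟩, hB, hBc⟩ := hz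
      have hBW : ∀ x ∈ z.2, x ∉ W := fun x hx => Finset.mem_compl.1 (hB hx)
      have h1 : (z.1 ∪ z.2) ∩ W = z.1 := by
        ext x
        simp only [Finset.mem_inter, Finset.mem_union]
        constructor
        · rintro ⟨h | h, hW⟩
          · exact h
          · exact absurd hW (hBW x h)
        · intro h; exact ⟨Or.inl h, hA h⟩
      have h2 : (z.1 ∪ z.2) \ W = z.2 := by
        ext x
        simp only [Finset.mem_sdiff, Finset.mem_union]
        constructor
        · rintro ⟨h | h, hW⟩
          · exact absurd (hA h) hW
          · exact h
        · intro h; exact ⟨Or.inr h, hBW x h⟩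
      show ((z.1 ∪ z.2) ∩ W, (z.1 ∪ z.2) \ W) = z
      rw [h1, h2]
  rw [key, Finset.card_product, Finset.card_powersetCard, Finset.card_powersetCard,
    Finset.card_compl]

/-- Krawtchouk identity -/
lemma kraw_sum (W : Finset ι) (i : ℕ) :
    ∑ S ∈ powersetCard i (univ : Finset ι), (-1 : ℚ) ^ (S ∩ W).card
      = kraw (Fintype.card ι) i W.card := by
  classical
  have hmaps : ∀ S ∈ powersetCard i (univ : Finset ι),
      (S ∩ W).card ∈ Finset.range (i + 1) := by
    intro S hS
    rw [Finset.mem_range, Nat.lt_succ_iff]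
    calc (S ∩ W).card ≤ S.card := Finset.card_le_card inter_subset_left
      _ = i := mem_powersetCard_univ.1 hS
  rw [← Finset.sum_fiberwise_of_maps_to hmaps (fun S => (-1 : ℚ) ^ (S ∩ W).card), kraw]
  refine Finset.sum_congr rfl fun l hl => ?_
  rw [Finset.sum_congr rfl (fun S hS => by
    rw [(Finset.mem_filter.1 hS).2]), Finset.sum_const, nsmul_eq_mul,
    count_inter W i l (Nat.lt_succ_iff.1 (Finset.mem_range.1 hl))]
  push_cast
  ring

namespace Stmt17

variable (p u : ℕ) (σ : (Fin p → ZMod 2) → (Fin u → ZMod 2))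

noncomputable def Cfin : Finset ((Fin p → ZMod 2) × (Fin u → ZMod 2)) :=
  Finset.image (fun a => (a, σ a)) Finset.univ

lemma inj_gen : Function.Injective (fun a : Fin p → ZMod 2 => (a, σ a)) :=
  fun _ _ h => congrArg Prod.fst h

lemma Cfin_card : (Cfin p u σ).card = 2 ^ p := by
  rw [Cfin, Finset.card_image_of_injective _ (inj_gen p u σ), Finset.card_univ]
  simp

lemma card_index : Fintype.card (Fin p ⊕ Fin u) = p + u := by simp

lemma filter_card (x y : (Fin p → ZMod 2) × (Fin u → ZMod 2)) :
    (Finset.univ.filter fun i => (coord p u x - coord p u y) i ≠ 0).card = pdist p u x y := by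
  classical
  rw [Finset.card_filter, Fintype.sum_sum_type]
  simp only [coord, Pi.sub_apply, Sum.elim_inl, Sum.elim_inr]
  rw [pdist, hammingDist, hammingDist, Finset.card_filter, Finset.card_filter]
  push_cast
  congr 1 <;> refine Finset.sum_congr rfl fun i _ => ?_ <;>
    simp [sub_ne_zero]

lemma pdist_le (x y : (Fin p → ZMod 2) × (Fin u → ZMod 2)) : pdist p u x y ≤ p + u := by
  have h1 : hammingDist x.1 y.1 ≤ p := by
    simpa using (hammingDist_le_card_fintype (x := x.1) (y := y.1))
  have h2 : hammingDist x.2 y.2 ≤ u := by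
    simpa using (hammingDist_le_card_fintype (x := x.2) (y := y.2))
  rw [pdist]; omega

lemma kraw_pdist (i : ℕ) (x y : (Fin p → ZMod 2) × (Fin u → ZMod 2)) :
    kraw (p + u) i (pdist p u x y)
      = ∑ S ∈ Finset.powersetCard i (Finset.univ : Finset (Fin p ⊕ Fin u)),
          chi S (coord p u x - coord p u y) := by
  classical
  have h := kraw_sum (Finset.univ.filter fun k => (coord p u x - coord p u y) k ≠ 0) i
  rw [filter_card, card_index] at h
  rw [← h]
  exact Finset.sum_congr rfl fun S _ => (chi_eq_neg_one_pow S _).symm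

lemma G_eq_zero (C : Set ((Fin p → ZMod 2) × (Fin u → ZMod 2)))
    (hC : C = Set.range fun a : Fin p → ZMod 2 => (a, σ a))
    (dperp : ℕ)
    (hdperp : IsLeast {i : ℕ | 1 ≤ i ∧ i ≤ p + u ∧ dualDistr p u C i ≠ 0} dperp)
    (S : Finset (Fin p ⊕ Fin u)) (hne : S.Nonempty) (hlt : S.card < dperp) :
    ∑ x ∈ Cfin p u σ, chi S (coord p u x) = 0 := by
  classical
  set i := S.card with hi
  have h1i : 1 ≤ i := hne.card_pos
  have hile : i ≤ p + u := by
    have := Finset.card_le_univ S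
    rwa [card_index] at this
  -- dualDistr vanishes at i
  have hzero : dualDistr p u C i = 0 := by
    by_contra h
    exact absurd (hdperp.2 ⟨h1i, hile, h⟩) (by omega)
  have hcoe : C = ↑(Cfin p u σ) := by
    rw [hC, Cfin, Finset.coe_image, Finset.coe_univ, Set.image_univ]
  have hcardC : (Nat.card C : ℚ) = 2 ^ p := by
    rw [hcoe, Nat.card_coe_set_eq, Set.ncard_coe_finset, Cfin_card]
    push_cast; ring
  -- rewrite distDistr
  have hdist : ∀ j, distDistr p u C j =
      ((((Cfin p u σ) ×ˢ (Cfin p u σ)).filter fun z => pdist p u z.1 z.2 = j).card : ℚ)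
        / 2 ^ p := by
    intro j
    rw [distDistr, hcardC]
    congr 1
    have hseteq : {z : ((Fin p → ZMod 2) × (Fin u → ZMod 2)) ×
        ((Fin p → ZMod 2) × (Fin u → ZMod 2)) |
        z.1 ∈ C ∧ z.2 ∈ C ∧ pdist p u z.1 z.2 = j}
        = ↑(((Cfin p u σ) ×ˢ (Cfin p u σ)).filter fun z => pdist p u z.1 z.2 = j) := by
      ext z
      simp [hcoe, Finset.mem_filter, Finset.mem_product, and_assoc]
    rw [hseteq, Nat.card_coe_set_eq, Set.ncard_coe_finset]
  -- numerator as sum of squares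
  have hmaps : ∀ z ∈ (Cfin p u σ) ×ˢ (Cfin p u σ),
      pdist p u z.1 z.2 ∈ Finset.range (p + u + 1) := by
    intro z _
    rw [Finset.mem_range, Nat.lt_succ_iff]
    exact pdist_le p u z.1 z.2
  have hnum : ∑ j ∈ Finset.range (p + u + 1), distDistr p u C j * kraw (p + u) i j
      = (∑ S' ∈ Finset.powersetCard i (Finset.univ : Finset (Fin p ⊕ Fin u)),
          (∑ x ∈ Cfin p u σ, chi S' (coord p u x)) ^ 2) / 2 ^ p := by
    have step1 : ∀ j, distDistr p u C j * kraw (p + u) i j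
        = (∑ z ∈ ((Cfin p u σ) ×ˢ (Cfin p u σ)).filter (fun z => pdist p u z.1 z.2 = j),
            kraw (p + u) i (pdist p u z.1 z.2)) / 2 ^ p := by
      intro j
      rw [hdist j, div_mul_eq_mul_div]
      congr 1
      rw [Finset.sum_congr rfl (fun z hz => by rw [(Finset.mem_filter.1 hz).2]),
        Finset.sum_const, nsmul_eq_mul]
    rw [Finset.sum_congr rfl fun j _ => step1 j, ← Finset.sum_div,
      Finset.sum_fiberwise_of_maps_to hmaps (fun z => kraw (p + u) i (pdist p u z.1 z.2))]
    congr 1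
    rw [Finset.sum_congr rfl fun z _ => kraw_pdist p u i z.1 z.2, Finset.sum_comm]
    refine Finset.sum_congr rfl fun S' _ => ?_
    rw [Finset.sum_congr rfl fun z (_ : z ∈ (Cfin p u σ) ×ˢ (Cfin p u σ)) =>
        chi_sub S' (coord p u z.1) (coord p u z.2),
      Finset.sum_product' (f := fun a b => chi S' (coord p u a) * chi S' (coord p u b)),
      ← Finset.sum_mul_sum, sq]
  -- conclude each character sum vanishes
  have hsq : ∑ S' ∈ Finset.powersetCard i (Finset.univ : Finset (Fin p ⊕ Fin u)),
      (∑ x ∈ Cfin p u σ, chi S' (coord p u x)) ^ 2 = 0 := by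
    have h2 : (2 : ℚ) ^ p ≠ 0 := by positivity
    have := hzero
    rw [dualDistr, hnum, hcardC, div_div, div_eq_zero_iff] at this
    rcases this with h | h
    · exact h
    · exact absurd h (by positivity)
  have hSmem : S ∈ Finset.powersetCard i (Finset.univ : Finset (Fin p ⊕ Fin u)) :=
    Finset.mem_powersetCard_univ.2 rfl
  have := (Finset.sum_eq_zero_iff_of_nonneg fun S' _ => sq_nonneg _).1 hsq S hSmem
  exact pow_eq_zero_iff (by norm_num) |>.1 this

lemma ind_eq (c d : ZMod 2) : (if c = d then (1 : ℚ) else 0) = (1 + eps (c - d)) / 2 := by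
  by_cases h : c = d
  · simp [h, eps_zero]
  · have h' : c - d ≠ 0 := sub_ne_zero.2 h
    simp [h, eps, h']

end Stmt17

open Stmt17

/-- the syndrome map s(a, w) = w − σ(a) of a systematic code with
dual distance d⊥ is (d⊥ − 1)-resilient: for every set T of d⊥ − 1 coordinates,
every prescribed values b on T and every y, exactly 2^{n − (d⊥ − 1) − u} vectors
x satisfy π_T(x) = b and s(x) = y. -/
theorem stmt_17 (p u : ℕ)
    (σ : (Fin p → ZMod 2) → (Fin u → ZMod 2))
    (C : Set ((Fin p → ZMod 2) × (Fin u → ZMod 2)))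
    (hC : C = Set.range fun a : Fin p → ZMod 2 => (a, σ a))
    (s : (Fin p → ZMod 2) × (Fin u → ZMod 2) → (Fin u → ZMod 2))
    (hs : ∀ x, s x = x.2 - σ x.1)
    (dperp : ℕ)
    (hdperp : IsLeast {i : ℕ | 1 ≤ i ∧ i ≤ p + u ∧ dualDistr p u C i ≠ 0} dperp) :
    ∀ T : Finset (Fin p ⊕ Fin u), T.card = dperp - 1 →
      ∀ b : Fin p ⊕ Fin u → ZMod 2, ∀ y : Fin u → ZMod 2,
        Nat.card {x : (Fin p → ZMod 2) × (Fin u → ZMod 2) |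
            (∀ i ∈ T, coord p u x i = b i) ∧ s x = y} =
          2 ^ (p + u - (dperp - 1) - u) := by
  classical
  intro T hT b y
  have hd1 : 1 ≤ dperp := hdperp.1.1
  -- the count as a Finset card over the systematic part
  set P : (Fin p → ZMod 2) → Prop := fun a => ∀ i ∈ T, coord p u (a, y + σ a) i = b i with hP
  set M : ℕ := (Finset.univ.filter P).card with hM
  have hinj : Function.Injective (fun a : Fin p → ZMod 2 => (a, y + σ a)) :=
    fun _ _ h => congrArg Prod.fst h
  have hsetA : {x : (Fin p → ZMod 2) × (Fin u → ZMod 2) |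
      (∀ i ∈ T, coord p u x i = b i) ∧ s x = y}
      = (fun a : Fin p → ZMod 2 => (a, y + σ a)) '' {a | P a} := by
    ext x
    simp only [Set.mem_setOf_eq, Set.mem_image, hs x]
    constructor
    · rintro ⟨h1, h2⟩
      refine ⟨x.1, ?_, ?_⟩
      · have : x.2 = y + σ x.1 := by rw [← h2]; ring
        simpa [hP, ← this] using h1
      · have : x.2 = y + σ x.1 := by rw [← h2]; ring
        rw [← this]
    · rintro ⟨a, ha, rfl⟩
      exact ⟨ha, by ring⟩
  have hcount : Nat.card {x : (Fin p → ZMod 2) × (Fin u → ZMod 2) |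
      (∀ i ∈ T, coord p u x i = b i) ∧ s x = y} = M := by
    rw [hsetA, Nat.card_image_of_injective hinj]
    have : {a | P a} = ↑(Finset.univ.filter P) := by ext a; simp
    rw [this, Nat.card_coe_set_eq, Set.ncard_coe_finset]
  -- Fourier computation of M
  have hMQ : (M : ℚ) * 2 ^ T.card = 2 ^ p := by
    have hM1 : (M : ℚ) = ∑ a : Fin p → ZMod 2, if P a then (1 : ℚ) else 0 := by
      rw [hM, Finset.card_filter]
      push_cast
      exact Finset.sum_congr rfl fun a _ => by split <;> norm_num
    have hM2 : ∀ a : Fin p → ZMod 2,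
        (if P a then (1 : ℚ) else 0)
          = (∑ t ∈ T.powerset,
              chi t (coord p u (a, σ a)) * chi t (coord p u (0, y) - b)) / 2 ^ T.card := by
      intro a
      have e1 : (if P a then (1 : ℚ) else 0)
          = ∏ i ∈ T, (if coord p u (a, y + σ a) i = b i then (1 : ℚ) else 0) := by
        rw [Finset.prod_boole]
        by_cases h : P a
        · rw [if_pos h, if_pos (by simpa [hP] using h)]
        · rw [if_neg h, if_neg (by simpa [hP] using h)]
      rw [e1, Finset.prod_congr rfl fun i _ => ind_eq _ _]
      have e2 : ∀ i : Fin p ⊕ Fin u,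
          coord p u (a, y + σ a) i - b i
            = coord p u (a, σ a) i + (coord p u (0, y) i - b i) := by
        intro i
        cases i <;> simp [coord, CharTwo.sub_eq_add] <;> ring
      have e3 : ∏ i ∈ T, (1 + eps (coord p u (a, y + σ a) i - b i)) / 2
          = (∏ i ∈ T, (eps (coord p u (a, σ a) i) * eps (coord p u (0, y) i - b i) + 1))
              / 2 ^ T.card := by
        rw [← Finset.prod_const, ← Finset.prod_div_distrib]
        refine Finset.prod_congr rfl fun i _ => ?_
        rw [e2 i, eps_add]
        ring
      rw [e3, Finset.prod_add]
      congr 1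
      refine Finset.sum_congr rfl fun t _ => ?_
      rw [Finset.prod_const_one, mul_one, chi, chi, ← Finset.prod_mul_distrib]
      refine Finset.prod_congr rfl fun i _ => by rw [Pi.sub_apply]
    rw [hM1, Finset.sum_congr rfl fun a _ => hM2 a, ← Finset.sum_div,
      div_mul_cancel₀ _ (by positivity : (2 : ℚ) ^ T.card ≠ 0)]
    rw [Finset.sum_comm]
    have hz : ∀ t ∈ T.powerset, t ≠ ∅ →
        ∑ a : Fin p → ZMod 2, chi t (coord p u (a, σ a)) * chi t (coord p u (0, y) - b)
          = 0 := by
      intro t ht hne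
      rw [← Finset.sum_mul]
      have : ∑ a : Fin p → ZMod 2, chi t (coord p u (a, σ a))
          = ∑ x ∈ Cfin p u σ, chi t (coord p u x) := by
        rw [Cfin, Finset.sum_image fun a _ a' _ h => inj_gen p u σ h]
      rw [this, G_eq_zero p u σ C hC dperp hdperp t
        (Finset.nonempty_iff_ne_empty.2 hne) ?_, zero_mul]
      have hle := Finset.card_le_card (Finset.mem_powerset.1 ht)
      omega
    rw [Finset.sum_eq_single ∅ (fun t ht hne => hz t ht hne)
      (fun h => absurd (Finset.empty_mem_powerset T) h)]
    simp [chi_empty]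
  -- back to naturals
  have hMN : M * 2 ^ T.card = 2 ^ p := by exact_mod_cast hMQ
  have hTp : T.card ≤ p := by
    have hdvd : 2 ^ T.card ∣ 2 ^ p := ⟨M, by rw [mul_comm]; exact hMN.symm⟩
    exact (Nat.pow_dvd_pow_iff_le_right one_lt_two).1 hdvd
  have hMval : M = 2 ^ (p - T.card) := by
    have : 2 ^ (p - T.card) * 2 ^ T.card = 2 ^ p := by
      rw [← pow_add]; congr 1; omega
    exact Nat.eq_of_mul_eq_mul_right (Nat.pow_pos two_pos) (by rw [hMN, this])
  rw [hcount, hMval]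
  congr 1
  omega
end

section
/- Let C = {(a, σ(a)) : a ∈ F_2^{n−u}} ⊆ F_2^n be a code systematic at the first n−u positions with syndrome map s(a, w) = w − σ(a), and let d⊥ be its dual distance (defined via the Krawtchouk transform of its distance distribution). If δ ≥ n − d⊥ + 1, then for every c ∈ F_2^n, every m ∈ F_2^u and every W ⊆ {1,…,n} with #W = n − δ, the system [SS] (s(x) = m, x_i = c_i for all i ∈ W) has a solution; moreover the set of solutions has exactly 2^{δ−u} elements. -/
set_option linter.unusedSectionVars false
set_option maxHeartbeats 1000000

open Finset

namespace WP

/-- The ±1 character on ZMod 2 valued in ℚ. -/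
def eps (a : ZMod 2) : ℚ := if a = 0 then 1 else -1

lemma eps_add (a b : ZMod 2) : eps (a + b) = eps a * eps b := by
  have h : ∀ c : ZMod 2, c = 0 ∨ c = 1 := by decide
  rcases h a with ha | ha <;> rcases h b with hb | hb <;> subst ha <;> subst hb <;>
    simp [eps, show ((1 : ZMod 2) + 1) = 0 by decide, show (1 : ZMod 2) ≠ 0 by decide]

lemma eps_zero : eps 0 = 1 := rfl

lemma zmod2_ne_zero {c : ZMod 2} (h : c ≠ 0) : c = 1 :=
  (by decide : ∀ c : ZMod 2, c ≠ 0 → c = 1) c h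

variable {ι : Type*} [Fintype ι] [DecidableEq ι]

/-- character pairing. -/
def chi (v x : ι → ZMod 2) : ℚ := ∏ i, eps (v i * x i)

lemma chi_add_right (v x y : ι → ZMod 2) : chi v (x + y) = chi v x * chi v y := by
  simp only [chi, Pi.add_apply, mul_add, eps_add, ← Finset.prod_mul_distrib]

lemma chi_add_left (v w x : ι → ZMod 2) : chi (v + w) x = chi v x * chi w x := by
  simp only [chi, Pi.add_apply, add_mul, eps_add, ← Finset.prod_mul_distrib]

lemma chi_zero_right (v : ι → ZMod 2) : chi v 0 = 1 := by simp [chi, eps_zero]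
lemma chi_zero_left (x : ι → ZMod 2) : chi 0 x = 1 := by simp [chi, eps_zero]

lemma chi_eq_pow (v x : ι → ZMod 2) :
    chi v x = (-1 : ℚ) ^ ((univ.filter fun i => v i ≠ 0 ∧ x i ≠ 0).card) := by
  rw [chi]
  rw [Finset.prod_congr rfl (g := fun i => if (v i ≠ 0 ∧ x i ≠ 0) then (-1:ℚ) else 1)]
  · rw [Finset.prod_ite, Finset.prod_const, Finset.prod_const, one_pow, mul_one]
  · intro i _
    by_cases hv : v i = 0
    · simp [eps, hv]
    · by_cases hx : x i = 0 <;> simp [eps, hv, hx, mul_eq_zero]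

lemma card_fiber (Z : Finset ι) (i l : ℕ) (hl : l ≤ i) :
    (((univ : Finset ι).powersetCard i).filter fun A => (A ∩ Z).card = l).card
      = Z.card.choose l * (Zᶜ.card).choose (i - l) := by
  rw [← Finset.card_powersetCard, ← Finset.card_powersetCard, ← Finset.card_product]
  apply Finset.card_nbij' (i := fun A => (A ∩ Z, A \ Z)) (j := fun B => B.1 ∪ B.2)
  · intro A hA
    simp only [Finset.mem_coe, Finset.mem_filter, Finset.mem_powersetCard] at hA
    simp only [Finset.mem_coe, Finset.mem_product, Finset.mem_powersetCard]
    refine ⟨⟨Finset.inter_subset_right, hA.2⟩, ⟨?_, ?_⟩⟩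
    · intro x hx; simp only [Finset.mem_sdiff] at hx; simp [hx.2]
    · have := Finset.card_inter_add_card_sdiff A Z
      omega
  · intro B hB
    simp only [Finset.mem_coe, Finset.mem_product, Finset.mem_powersetCard] at hB
    have hB1 : B.1 ⊆ Z := hB.1.1
    have hB2 : ∀ x ∈ B.2, x ∉ Z := fun x hx => by simpa using hB.2.1 hx
    have h1 : (B.1 ∪ B.2) ∩ Z = B.1 := by
      ext x; simp only [mem_inter, mem_union]
      constructor
      · rintro ⟨h | h, hz⟩
        · exact h
        · exact absurd hz (hB2 x h)
      · intro h; exact ⟨Or.inl h, hB1 h⟩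
    have hdisj : Disjoint B.1 B.2 := by
      apply Finset.disjoint_left.mpr
      intro x hx1 hx2
      exact hB2 x hx2 (hB1 hx1)
    simp only [Finset.mem_coe, Finset.mem_filter, Finset.mem_powersetCard]
    refine ⟨⟨Finset.subset_univ _, ?_⟩, by rw [h1, hB.1.2]⟩
    rw [Finset.card_union_of_disjoint hdisj, hB.1.2, hB.2.2]; omega
  · intro A hA
    ext x
    simp only [mem_union, mem_inter, mem_sdiff]
    by_cases h : x ∈ Z <;> simp [h]
  · intro B hB
    simp only [Finset.mem_coe, Finset.mem_product, Finset.mem_powersetCard] at hB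
    have hB1 : B.1 ⊆ Z := hB.1.1
    have hB2 : ∀ x ∈ B.2, x ∉ Z := fun x hx => by simpa using hB.2.1 hx
    have h1 : (B.1 ∪ B.2) ∩ Z = B.1 := by
      ext x; simp only [mem_inter, mem_union]
      constructor
      · rintro ⟨h | h, hz⟩
        · exact h
        · exact absurd hz (hB2 x h)
      · intro h; exact ⟨Or.inl h, hB1 h⟩
    have h2 : (B.1 ∪ B.2) \ Z = B.2 := by
      ext x; simp only [mem_sdiff, mem_union]
      constructor
      · rintro ⟨h | h, hz⟩
        · exact absurd (hB1 h) hz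
        · exact h
      · intro h; exact ⟨Or.inr h, hB2 x h⟩
    exact Prod.ext h1 h2

lemma hammingNorm_eq (x : ι → ZMod 2) :
    hammingNorm x = (univ.filter fun i => x i ≠ 0).card := rfl

lemma sum_chi_weight (i : ℕ) (z : ι → ZMod 2) :
    ∑ v ∈ univ.filter (fun v : ι → ZMod 2 => hammingNorm v = i), chi v z
      = kraw (Fintype.card ι) i (hammingNorm z) := by
  set Z : Finset ι := univ.filter fun j => z j ≠ 0 with hZ
  have hZcard : hammingNorm z = Z.card := rfl
  have step1 : ∑ v ∈ univ.filter (fun v : ι → ZMod 2 => hammingNorm v = i), chi v z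
      = ∑ A ∈ (univ : Finset ι).powersetCard i, (-1 : ℚ) ^ ((A ∩ Z).card) := by
    apply Finset.sum_nbij' (i := fun v => univ.filter fun j => v j ≠ 0)
      (j := fun A => fun j => if j ∈ A then 1 else 0)
    · intro v hv
      simp only [mem_filter, mem_powersetCard] at hv ⊢
      exact ⟨Finset.subset_univ _, hv.2⟩
    · intro A hA
      simp only [mem_powersetCard] at hA
      simp only [Finset.mem_coe, mem_filter, mem_univ, true_and]
      rw [hammingNorm_eq, ← hA.2]
      congr 1
      ext j
      simp only [mem_filter, mem_univ, true_and]
      by_cases h : j ∈ A <;> simp [h]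
    · intro v hv
      funext j
      by_cases h : v j = 0
      · simp [h]
      · have h1 : v j = 1 := zmod2_ne_zero h
        simp [h, h1]
    · intro A hA
      ext j
      simp only [mem_filter, mem_univ, true_and]
      by_cases h : j ∈ A <;> simp [h]
    · intro v hv
      rw [chi_eq_pow]
      congr 2
      rw [Finset.filter_and]
  rw [step1, hZcard]
  rw [← Finset.sum_fiberwise_of_maps_to (g := fun A => (A ∩ Z).card)
    (t := Finset.range (i + 1)) (fun A hA => by
      simp only [mem_powersetCard] at hA
      simp only [mem_range]
      have h1 : (A ∩ Z).card ≤ A.card := Finset.card_le_card Finset.inter_subset_left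
      omega)]
  unfold kraw
  apply Finset.sum_congr rfl
  intro l hl
  have hli : l ≤ i := by simp only [mem_range] at hl; omega
  have : ∀ A ∈ ((univ : Finset ι).powersetCard i).filter fun A => (A ∩ Z).card = l,
      (-1 : ℚ) ^ ((A ∩ Z).card) = (-1 : ℚ) ^ l := by
    intro A hA
    simp only [mem_filter] at hA
    rw [hA.2]
  rw [Finset.sum_congr rfl this, Finset.sum_const, card_fiber Z i l hli]
  have hc : Zᶜ.card = Fintype.card ι - Z.card := by
    rw [Finset.card_compl]
  rw [hc]
  push_cast
  ring

/-- vectors supported on W -/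
def DW (W : Finset ι) : Finset (ι → ZMod 2) :=
  univ.filter fun v => ∀ i ∉ W, v i = 0

def delta (a : ι) : ι → ZMod 2 := fun i => if i = a then 1 else 0

lemma chi_delta (a : ι) (z : ι → ZMod 2) : chi (delta a) z = eps (z a) := by
  rw [chi]
  rw [Finset.prod_eq_single a]
  · simp [delta]
  · intro b _ hb; simp [delta, hb, eps]
  · simp

lemma delta_add_delta (a : ι) : delta a + delta a = (0 : ι → ZMod 2) := by
  funext i
  simp only [Pi.add_apply, delta, Pi.zero_apply]
  by_cases h : i = a <;> simp [h] <;> decide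

lemma sum_chi_DW (W : Finset ι) (z : ι → ZMod 2) :
    ∑ v ∈ DW W, chi v z = if (∀ i ∈ W, z i = 0) then (2 : ℚ) ^ W.card else 0 := by
  induction W using Finset.induction with
  | empty =>
    have : DW (∅ : Finset ι) = {0} := by
      ext v
      simp only [DW, mem_filter, mem_univ, true_and, Finset.mem_singleton]
      constructor
      · intro h; funext i; exact h i (by simp)
      · intro h; subst h; simp
    simp [this, chi_zero_left]
  | @insert a W ha ih =>
    rw [← Finset.sum_filter_add_sum_filter_not (DW (insert a W)) (fun v => v a = 0)]
    have h1 : (DW (insert a W)).filter (fun v => v a = 0) = DW W := by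
      ext v
      simp only [DW, mem_filter, mem_univ, true_and]
      constructor
      · rintro ⟨h, hva⟩ i hi
        by_cases hia : i = a
        · subst hia; exact hva
        · exact h i (by simp [hia, hi])
      · intro h
        exact ⟨fun i hi => h i (fun hiW => hi (Finset.mem_insert_of_mem hiW)),
          h a ha⟩
    have h2 : ∑ v ∈ (DW (insert a W)).filter (fun v => ¬ v a = 0), chi v z
        = ∑ w ∈ DW W, (chi w z * eps (z a)) := by
      apply Finset.sum_nbij' (i := fun v => v + delta a) (j := fun w => w + delta a)
      · intro v hv
        simp only [DW, mem_filter, mem_univ, true_and] at hv ⊢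
        intro i hi
        by_cases hia : i = a
        · subst hia
          have : v i = 1 := zmod2_ne_zero hv.2
          simp [delta, this]
          decide
        · simp only [Pi.add_apply, delta, if_neg hia, add_zero]
          exact hv.1 i (by simp [hia, hi])
      · intro w hw
        simp only [DW, mem_filter, mem_univ, true_and] at hw ⊢
        constructor
        · intro i hi
          have hia : i ≠ a := fun h => hi (h ▸ Finset.mem_insert_self a W)
          have hiW : i ∉ W := fun h => hi (Finset.mem_insert_of_mem h)
          simp [delta, hia, hw i hiW]
        · have : w a = 0 := hw a ha
          simp [delta, this]
      · intro v hv
        rw [add_assoc, delta_add_delta, add_zero]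
      · intro w hw
        rw [add_assoc, delta_add_delta, add_zero]
      · intro v hv
        conv_lhs => rw [show v = (v + delta a) + delta a by
          rw [add_assoc, delta_add_delta, add_zero]]
        rw [chi_add_left, chi_delta]
    rw [h1, h2, ← Finset.sum_mul, ih]
    by_cases hza : z a = 0
    · have hcond : (∀ i ∈ insert a W, z i = 0) ↔ (∀ i ∈ W, z i = 0) := by
        constructor
        · intro h i hi; exact h i (Finset.mem_insert_of_mem hi)
        · intro h i hi
          rcases Finset.mem_insert.mp hi with h' | h'
          · subst h'; exact hza
          · exact h i h'
      by_cases hW : ∀ i ∈ W, z i = 0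
      · rw [if_pos hW, if_pos (hcond.mpr hW), Finset.card_insert_of_notMem ha]
        simp [eps, hza]
        ring
      · rw [if_neg hW, if_neg (fun h => hW (hcond.mp h))]
        simp
    · have : ¬ (∀ i ∈ insert a W, z i = 0) := fun h => hza (h a (Finset.mem_insert_self a W))
      rw [if_neg this]
      by_cases hW : ∀ i ∈ W, z i = 0
      · rw [if_pos hW]
        simp [eps, hza]
      · rw [if_neg hW]
        simp

end WP

namespace WP2
variable (p u : ℕ) (σ : (Fin p → ZMod 2) → (Fin u → ZMod 2))

/-- codeword as a vector indexed by Fin p ⊕ Fin u -/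
def codeV (a : Fin p → ZMod 2) : (Fin p ⊕ Fin u) → ZMod 2 := Sum.elim a (σ a)

lemma hd_sum (x1 y1 : Fin p → ZMod 2) (x2 y2 : Fin u → ZMod 2) :
    hammingDist (Sum.elim x1 x2) (Sum.elim y1 y2) = hammingDist x1 y1 + hammingDist x2 y2 := by
  simp only [hammingDist, Finset.card_filter]
  rw [Fintype.sum_sum_type]
  simp
  congr 1 <;> refine Finset.sum_congr rfl (fun x _ => ?_) <;> split_ifs <;> simp_all

lemma neg_zmod2 (x : (Fin p ⊕ Fin u) → ZMod 2) : -x = x := by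
  funext i
  have : ∀ c : ZMod 2, -c = c := by decide
  exact this (x i)

end WP2

/-- for a systematic code C = {(a, σ(a))} (block sizes p = n−u
and u) with dual distance d⊥, if δ ≥ n − d⊥ + 1 then for every c, every m and
every set W of locked coordinates with #W = n − δ, the wet paper system [SS]
(s(x) = m, x_i = c_i for i ∈ W) has a solution, and the set of solutions has
exactly 2^{δ−u} elements. -/
theorem stmt_19 (p u δ : ℕ) (hδ : δ ≤ p + u)
    (σ : (Fin p → ZMod 2) → (Fin u → ZMod 2))
    (C : Set ((Fin p → ZMod 2) × (Fin u → ZMod 2)))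
    (hC : C = Set.range fun a : Fin p → ZMod 2 => (a, σ a))
    (s : (Fin p → ZMod 2) × (Fin u → ZMod 2) → (Fin u → ZMod 2))
    (hs : ∀ x, s x = x.2 - σ x.1)
    (dperp : ℕ)
    (hdperp : IsLeast {i : ℕ | 1 ≤ i ∧ i ≤ p + u ∧ dualDistr p u C i ≠ 0} dperp)
    (hδd : δ ≥ p + u - dperp + 1) :
    ∀ (c : (Fin p → ZMod 2) × (Fin u → ZMod 2)) (m : Fin u → ZMod 2)
      (W : Finset (Fin p ⊕ Fin u)), W.card = p + u - δ →
      (∃ x, s x = m ∧ ∀ i ∈ W, coord p u x i = coord p u c i) ∧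
      Nat.card {x : (Fin p → ZMod 2) × (Fin u → ZMod 2) |
          s x = m ∧ ∀ i ∈ W, coord p u x i = coord p u c i} = 2 ^ (δ - u) := by
  classical
  intro c m W hW
  have hcard_ι : Fintype.card (Fin p ⊕ Fin u) = p + u := by simp
  have hdp1 : 1 ≤ dperp := hdperp.1.1
  have hdpn : dperp ≤ p + u := hdperp.1.2.1
  have hWlt : W.card < dperp := by omega
  -- cardinality of C
  have hCcard : Nat.card C = 2 ^ p := by
    rw [hC, Nat.card_range_of_injective
      (f := fun a : Fin p → ZMod 2 => (a, σ a))
      (fun a b h => congrArg Prod.fst h), Nat.card_eq_fintype_card]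
    simp
  -- the character sum over the code
  set S : ((Fin p ⊕ Fin u) → ZMod 2) → ℚ :=
    fun v => ∑ a : Fin p → ZMod 2, WP.chi v (WP2.codeV p u σ a) with hS
  -- number of pairs of codewords at distance j
  set Npairs : ℕ → ℕ := fun j =>
    ((univ : Finset ((Fin p → ZMod 2) × (Fin p → ZMod 2))).filter
      (fun ab => hammingDist (WP2.codeV p u σ ab.1) (WP2.codeV p u σ ab.2) = j)).card
      with hNp
  have hpdist : ∀ a b : Fin p → ZMod 2,
      pdist p u (a, σ a) (b, σ b) = hammingDist (WP2.codeV p u σ a) (WP2.codeV p u σ b) :=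
    fun a b => (WP2.hd_sum p u a b (σ a) (σ b)).symm
  -- distDistr in terms of Npairs
  have hdist : ∀ j : ℕ, distDistr p u C j = (Npairs j : ℚ) / (2 ^ p : ℚ) := by
    intro j
    have hset : {z : ((Fin p → ZMod 2) × (Fin u → ZMod 2)) ×
        ((Fin p → ZMod 2) × (Fin u → ZMod 2)) |
        z.1 ∈ C ∧ z.2 ∈ C ∧ pdist p u z.1 z.2 = j}
        = (fun ab : (Fin p → ZMod 2) × (Fin p → ZMod 2) =>
            ((ab.1, σ ab.1), (ab.2, σ ab.2))) ''
          {ab | hammingDist (WP2.codeV p u σ ab.1) (WP2.codeV p u σ ab.2) = j} := by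
      ext z
      simp only [Set.mem_setOf_eq, Set.mem_image, hC, Set.mem_range, Prod.exists]
      constructor
      · rintro ⟨⟨a, ha⟩, ⟨b, hb⟩, hd⟩
        refine ⟨a, b, ?_, ?_⟩
        · rw [← hpdist, ha, hb]; exact hd
        · rw [ha, hb]
      · rintro ⟨a, b, hab, rfl⟩
        exact ⟨⟨a, rfl⟩, ⟨b, rfl⟩, by rw [hpdist]; exact hab⟩
    have hinj : Function.Injective
        (fun ab : (Fin p → ZMod 2) × (Fin p → ZMod 2) =>
          ((ab.1, σ ab.1), (ab.2, σ ab.2))) := by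
      intro x y h
      have h1 := congrArg (fun z => z.1.1) h
      have h2 := congrArg (fun z => z.2.1) h
      exact Prod.ext h1 h2
    rw [distDistr, hset, Nat.card_image_of_injective hinj, hCcard,
      Nat.card_coe_set_eq,
      show {ab : (Fin p → ZMod 2) × (Fin p → ZMod 2) |
          hammingDist (WP2.codeV p u σ ab.1) (WP2.codeV p u σ ab.2) = j}
        = ((univ.filter (fun ab : (Fin p → ZMod 2) × (Fin p → ZMod 2) =>
            hammingDist (WP2.codeV p u σ ab.1) (WP2.codeV p u σ ab.2) = j) : Finset _) : Set _)
        by ext ab; simp, Set.ncard_coe_finset]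
    push_cast
    ring
  -- the Krawtchouk transform as a sum of squares
  have hkey : ∀ i : ℕ,
      (∑ j ∈ Finset.range (p + u + 1), distDistr p u C j * kraw (p + u) i j) * (2 ^ p : ℚ)
        = ∑ v ∈ univ.filter (fun v : (Fin p ⊕ Fin u) → ZMod 2 => hammingNorm v = i),
            (S v) ^ 2 := by
    intro i
    have e1 : (∑ j ∈ Finset.range (p + u + 1), distDistr p u C j * kraw (p + u) i j)
        * (2 ^ p : ℚ)
        = ∑ j ∈ Finset.range (p + u + 1), (Npairs j : ℚ) * kraw (p + u) i j := by
      rw [Finset.sum_mul]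
      apply Finset.sum_congr rfl
      intro j _
      rw [hdist j]
      field_simp
    have e2 : ∑ j ∈ Finset.range (p + u + 1), (Npairs j : ℚ) * kraw (p + u) i j
        = ∑ ab : (Fin p → ZMod 2) × (Fin p → ZMod 2),
            kraw (p + u) i (hammingDist (WP2.codeV p u σ ab.1) (WP2.codeV p u σ ab.2)) := by
      rw [← Finset.sum_fiberwise_of_maps_to
        (g := fun ab : (Fin p → ZMod 2) × (Fin p → ZMod 2) =>
          hammingDist (WP2.codeV p u σ ab.1) (WP2.codeV p u σ ab.2))
        (t := Finset.range (p + u + 1)) (fun ab _ => by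
          simp only [mem_range]
          have := hammingDist_le_card_fintype
            (x := WP2.codeV p u σ ab.1) (y := WP2.codeV p u σ ab.2)
          rw [hcard_ι] at this
          omega)]
      apply Finset.sum_congr rfl
      intro j _
      have : ∀ ab ∈ univ.filter (fun ab : (Fin p → ZMod 2) × (Fin p → ZMod 2) =>
          hammingDist (WP2.codeV p u σ ab.1) (WP2.codeV p u σ ab.2) = j),
          kraw (p + u) i (hammingDist (WP2.codeV p u σ ab.1) (WP2.codeV p u σ ab.2))
            = kraw (p + u) i j := by
        intro ab hab
        simp only [mem_filter] at hab
        rw [hab.2]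
      rw [Finset.sum_congr rfl this, Finset.sum_const, hNp, nsmul_eq_mul]
    have e3 : ∀ ab : (Fin p → ZMod 2) × (Fin p → ZMod 2),
        kraw (p + u) i (hammingDist (WP2.codeV p u σ ab.1) (WP2.codeV p u σ ab.2))
          = ∑ v ∈ univ.filter (fun v : (Fin p ⊕ Fin u) → ZMod 2 => hammingNorm v = i),
              WP.chi v (WP2.codeV p u σ ab.1) * WP.chi v (WP2.codeV p u σ ab.2) := by
      intro ab
      rw [hammingDist_eq_hammingNorm, ← hcard_ι, ← WP.sum_chi_weight]
      apply Finset.sum_congr rfl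
      intro v _
      rw [WP2.neg_zmod2, WP.chi_add_right]
    rw [e1, e2, Finset.sum_congr rfl (fun ab _ => e3 ab), Finset.sum_comm]
    apply Finset.sum_congr rfl
    intro v _
    rw [sq, hS]
    rw [Fintype.sum_prod_type]
    exact (Finset.sum_mul_sum univ univ
      (fun a => WP.chi v (WP2.codeV p u σ a)) (fun b => WP.chi v (WP2.codeV p u σ b))).symm
  -- vanishing of character sums below the dual distance
  have hSvanish : ∀ v : (Fin p ⊕ Fin u) → ZMod 2, v ≠ 0 → hammingNorm v < dperp → S v = 0 := by
    intro v hv0 hvd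
    set i := hammingNorm v with hi
    have hi1 : 1 ≤ i := by
      rcases Nat.eq_zero_or_pos i with h | h
      · exact absurd (hammingNorm_eq_zero.mp (by rw [← hi]; exact h)) hv0
      · exact h
    have hin : i ≤ p + u := by
      have := hammingNorm_le_card_fintype (x := v)
      rw [hcard_ι] at this
      exact this
    have hdd0 : dualDistr p u C i = 0 := by
      by_contra h
      exact absurd (hdperp.2 ⟨hi1, hin, h⟩) (by omega)
    have hz : (∑ j ∈ Finset.range (p + u + 1), distDistr p u C j * kraw (p + u) i j) = 0 := by
      have := hdd0
      rw [dualDistr, hCcard, div_eq_zero_iff] at this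
      rcases this with h | h
      · exact h
      · exact absurd h (by positivity)
    have hsum0 : ∑ w ∈ univ.filter (fun w : (Fin p ⊕ Fin u) → ZMod 2 => hammingNorm w = i),
        (S w) ^ 2 = 0 := by
      rw [← hkey i, hz, zero_mul]
    have := (Finset.sum_eq_zero_iff_of_nonneg
      (fun w _ => sq_nonneg (S w))).mp hsum0 v (by simp [hi])
    exact sq_eq_zero_iff.mp this
  -- the counting argument
  set b : (Fin p ⊕ Fin u) → ZMod 2 := fun i => coord p u c i - Sum.elim (0 : Fin p → ZMod 2) m i with hb
  set T : ℕ := ((univ : Finset (Fin p → ZMod 2)).filter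
    (fun a => ∀ i ∈ W, WP2.codeV p u σ a i = b i)).card with hT
  have hTq : (T : ℚ) * 2 ^ W.card = 2 ^ p := by
    have step1 : (T : ℚ) * 2 ^ W.card
        = ∑ a : Fin p → ZMod 2,
            (if (∀ i ∈ W, WP2.codeV p u σ a i = b i) then (2 : ℚ) ^ W.card else 0) := by
      rw [← Finset.sum_filter, Finset.sum_const, nsmul_eq_mul, hT]
    have step2 : ∀ a : Fin p → ZMod 2,
        (if (∀ i ∈ W, WP2.codeV p u σ a i = b i) then (2 : ℚ) ^ W.card else 0)
          = ∑ v ∈ WP.DW W, WP.chi v (WP2.codeV p u σ a - b) := by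
      intro a
      rw [WP.sum_chi_DW]
      congr 1
      simp only [eq_iff_iff]
      constructor
      · intro h i hi
        rw [Pi.sub_apply, sub_eq_zero]
        exact h i hi
      · intro h i hi
        have := h i hi
        rw [Pi.sub_apply, sub_eq_zero] at this
        exact this
    have step3 : ∑ a : Fin p → ZMod 2, ∑ v ∈ WP.DW W, WP.chi v (WP2.codeV p u σ a - b)
        = ∑ v ∈ WP.DW W, S v * WP.chi v b := by
      rw [Finset.sum_comm]
      apply Finset.sum_congr rfl
      intro v _
      rw [hS, Finset.sum_mul]
      apply Finset.sum_congr rfl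
      intro a _
      rw [sub_eq_add_neg, WP2.neg_zmod2, WP.chi_add_right]
    have step4 : ∑ v ∈ WP.DW W, S v * WP.chi v b = 2 ^ p := by
      rw [Finset.sum_eq_single_of_mem (0 : (Fin p ⊕ Fin u) → ZMod 2)
        (by simp [WP.DW])]
      · rw [WP.chi_zero_left, mul_one, hS]
        simp only [WP.chi_zero_left]
        rw [Finset.sum_const, nsmul_eq_mul, mul_one]
        simp
      · intro v hv hv0
        have hnorm : hammingNorm v ≤ W.card := by
          rw [WP.hammingNorm_eq]
          apply Finset.card_le_card
          intro i hi
          simp only [mem_filter, mem_univ, true_and] at hi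
          by_contra hiW
          simp only [WP.DW, mem_filter, mem_univ, true_and] at hv
          exact hi (hv i hiW)
        rw [hSvanish v hv0 (lt_of_le_of_lt hnorm hWlt), zero_mul]
    rw [step1, Finset.sum_congr rfl (fun a _ => step2 a), step3, step4]
  have hTnat : T * 2 ^ W.card = 2 ^ p := by exact_mod_cast hTq
  have hWp : W.card ≤ p := by
    have hdvd : (2 : ℕ) ^ W.card ∣ 2 ^ p := ⟨T, by rw [← hTnat, mul_comm]⟩
    exact (Nat.pow_dvd_pow_iff_le_right one_lt_two).mp hdvd
  have hTval : T = 2 ^ (δ - u) := by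
    have h2 : (2 : ℕ) ^ p = 2 ^ (p - W.card) * 2 ^ W.card := by
      rw [← pow_add]
      congr 1
      omega
    have hTv : T = 2 ^ (p - W.card) := by
      have hpos : 0 < (2 : ℕ) ^ W.card := pow_pos (by norm_num) _
      exact Nat.eq_of_mul_eq_mul_right hpos (by rw [hTnat, h2])
    rw [hTv]
    congr 1
    omega
  -- relating the solution set to the filter
  have hSolSet : {x : (Fin p → ZMod 2) × (Fin u → ZMod 2) |
      s x = m ∧ ∀ i ∈ W, coord p u x i = coord p u c i}
      = (fun a : Fin p → ZMod 2 => (a, σ a + m)) ''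
        {a | ∀ i ∈ W, WP2.codeV p u σ a i = b i} := by
    ext x
    simp only [Set.mem_setOf_eq, Set.mem_image, hs]
    constructor
    · rintro ⟨h1, h2⟩
      have hx2 : x.2 = σ x.1 + m := by
        have := sub_eq_iff_eq_add.mp h1
        rw [this, add_comm]
      refine ⟨x.1, ?_, ?_⟩
      · intro i hi
        have hxc := h2 i hi
        cases i with
        | inl j =>
          simpa [WP2.codeV, coord, hb] using hxc
        | inr j =>
          have : x.2 j = c.2 j := by simpa [coord] using hxc
          have h3 : σ x.1 j + m j = c.2 j := by
            rw [← this, hx2]; simp [add_comm]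
          simp only [WP2.codeV, Sum.elim_inr, hb, coord, Sum.elim_inr, Pi.sub_apply]
          exact eq_sub_of_add_eq h3
      · exact Prod.ext rfl hx2.symm
    · rintro ⟨a, haP, rfl⟩
      refine ⟨by simp, ?_⟩
      intro i hi
      have hbi := haP i hi
      cases i with
      | inl j =>
        simpa [WP2.codeV, coord, hb] using hbi
      | inr j =>
        simp only [WP2.codeV, Sum.elim_inr, hb, coord, Pi.sub_apply] at hbi ⊢
        rw [Pi.add_apply, hbi]
        abel
  have hSolCard : Nat.card {x : (Fin p → ZMod 2) × (Fin u → ZMod 2) |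
      s x = m ∧ ∀ i ∈ W, coord p u x i = coord p u c i} = 2 ^ (δ - u) := by
    rw [hSolSet, Nat.card_image_of_injective (fun a a' h => congrArg Prod.fst h)]
    rw [Nat.card_coe_set_eq,
      show {a : Fin p → ZMod 2 | ∀ i ∈ W, WP2.codeV p u σ a i = b i}
        = ((univ.filter (fun a : Fin p → ZMod 2 => ∀ i ∈ W, WP2.codeV p u σ a i = b i) :
            Finset _) : Set _) by ext a; simp, Set.ncard_coe_finset, ← hT, hTval]
  refine ⟨?_, hSolCard⟩
  have hpos : 0 < Nat.card {x : (Fin p → ZMod 2) × (Fin u → ZMod 2) |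
      s x = m ∧ ∀ i ∈ W, coord p u x i = coord p u c i} := by
    rw [hSolCard]
    positivity
  obtain ⟨⟨x, hx⟩⟩ := (Nat.card_pos_iff.mp hpos).1
  exact ⟨x, hx.1, hx.2⟩
end
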